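/- Let f₁, f₂ : ℝⁿ → ℝ ∪ {+∞} be lower semicontinuous functions and u ∈ 𝕊. Then the pointwise minimum satisfies ∂(min{f₁,f₂})(∞;u) ⊆ ∂f₁(∞;u) ∪ ∂f₂(∞;u) and ∂^∞(min{f₁,f₂})(∞;u) ⊆ ∂^∞f₁(∞;u) ∪ ∂^∞f₂(∞;u). -/
import Mathlib


open Filter Topology Set
open scoped RealInnerProductSpace Pointwise

noncomputable section

/-- `ℝⁿ` with the Euclidean structure. -/
abbrev Eu (n : ℕ) := EuclideanSpace ℝ (Fin n)

/-- `x_k →ᵘ ∞` : `‖x_k‖ → ∞` and `x_k / ‖x_k‖ → u`. -/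
def TendstoDirInfty {n : ℕ} (x : ℕ → Eu n) (u : Eu n) : Prop :=
  Tendsto (fun k => ‖x k‖) atTop atTop ∧
  Tendsto (fun k => ‖x k‖⁻¹ • x k) atTop (𝓝 u)

/-- The Euclidean norm of `p ∈ ℝⁿ × ℝ`. -/
def pnorm {n : ℕ} (p : Eu n × ℝ) : ℝ := Real.sqrt (‖p.1‖ ^ 2 + p.2 ^ 2)

/-- The Euclidean inner product on `ℝⁿ × ℝ`. -/
def pinner {n : ℕ} (v p : Eu n × ℝ) : ℝ := ⟪v.1, p.1⟫ + v.2 * p.2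

/-- The Fréchet (regular) normal cone to `S ⊆ ℝⁿ × ℝ` at `q` (empty when `q ∉ S`). -/
def frechetNCP {n : ℕ} (S : Set (Eu n × ℝ)) (q : Eu n × ℝ) : Set (Eu n × ℝ) :=
  {w | q ∈ S ∧ ∀ ε > 0, ∃ δ > 0, ∀ p ∈ S, pnorm (p - q) < δ →
        pinner w (p - q) ≤ ε * pnorm (p - q)}

/-- Epigraph of `f : ℝⁿ → ℝ ∪ {+∞}`. -/
def epigraph {n : ℕ} (f : Eu n → EReal) : Set (Eu n × ℝ) := {p | f p.1 ≤ (p.2 : EReal)}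

/-- The limiting subdifferential of `f` in direction `u` at infinity:
`ξ` with `(ξ_k, -s_k) ∈ N̂((x_k, r_k); epi f)`, `r_k ≥ f(x_k)`, `x_k →ᵘ ∞`,
`(ξ_k, -s_k) → (ξ, -1)`. -/
def dirSubdiffInfty {n : ℕ} (f : Eu n → EReal) (u : Eu n) : Set (Eu n) :=
  {ξ | ∃ (x : ℕ → Eu n) (r : ℕ → ℝ) (w : ℕ → Eu n × ℝ),
      TendstoDirInfty x u ∧ (∀ k, f (x k) ≤ ((r k : ℝ) : EReal)) ∧
      (∀ k, w k ∈ frechetNCP (epigraph f) (x k, r k)) ∧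
      Tendsto w atTop (𝓝 (ξ, (-1 : ℝ)))}

/-- The singular subdifferential of `f` in direction `u` at infinity. -/
def dirSingSubdiffInfty {n : ℕ} (f : Eu n → EReal) (u : Eu n) : Set (Eu n) :=
  {ξ | ∃ (x : ℕ → Eu n) (r : ℕ → ℝ) (w : ℕ → Eu n × ℝ),
      TendstoDirInfty x u ∧ (∀ k, f (x k) ≤ ((r k : ℝ) : EReal)) ∧
      (∀ k, w k ∈ frechetNCP (epigraph f) (x k, r k)) ∧
      Tendsto w atTop (𝓝 (ξ, (0 : ℝ)))}

lemma frechetNCP_mono {n : ℕ} {A S : Set (Eu n × ℝ)} (hAS : A ⊆ S) {q w : Eu n × ℝ}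
    (hq : q ∈ A) (hw : w ∈ frechetNCP S q) : w ∈ frechetNCP A q := by
  refine ⟨hq, fun ε hε => ?_⟩
  obtain ⟨δ, hδ, h⟩ := hw.2 ε hε
  exact ⟨δ, hδ, fun p hp => h p (hAS hp)⟩

lemma epigraph_min {n : ℕ} (f₁ f₂ : Eu n → EReal) :
    epigraph (fun y => min (f₁ y) (f₂ y)) = epigraph f₁ ∪ epigraph f₂ := by
  ext p; simp [epigraph, min_le_iff]

lemma TendstoDirInfty.comp_strictMono {n : ℕ} {x : ℕ → Eu n} {u : Eu n}
    (hx : TendstoDirInfty x u) {φ : ℕ → ℕ} (hφ : StrictMono φ) :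
    TendstoDirInfty (x ∘ φ) u :=
  ⟨hx.1.comp hφ.tendsto_atTop, hx.2.comp hφ.tendsto_atTop⟩

lemma min_aux {n : ℕ} {f₁ f₂ : Eu n → EReal} {u : Eu n} {l : ℝ} {ξ : Eu n}
    (x : ℕ → Eu n) (r : ℕ → ℝ) (w : ℕ → Eu n × ℝ)
    (hx : TendstoDirInfty x u)
    (hr : ∀ k, min (f₁ (x k)) (f₂ (x k)) ≤ ((r k : ℝ) : EReal))
    (hw : ∀ k, w k ∈ frechetNCP (epigraph fun y => min (f₁ y) (f₂ y)) (x k, r k))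
    (hlim : Tendsto w atTop (𝓝 (ξ, l))) :
    (∃ (x' : ℕ → Eu n) (r' : ℕ → ℝ) (w' : ℕ → Eu n × ℝ),
        TendstoDirInfty x' u ∧ (∀ k, f₁ (x' k) ≤ ((r' k : ℝ) : EReal)) ∧
        (∀ k, w' k ∈ frechetNCP (epigraph f₁) (x' k, r' k)) ∧
        Tendsto w' atTop (𝓝 (ξ, l))) ∨
    (∃ (x' : ℕ → Eu n) (r' : ℕ → ℝ) (w' : ℕ → Eu n × ℝ),
        TendstoDirInfty x' u ∧ (∀ k, f₂ (x' k) ≤ ((r' k : ℝ) : EReal)) ∧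
        (∀ k, w' k ∈ frechetNCP (epigraph f₂) (x' k, r' k)) ∧
        Tendsto w' atTop (𝓝 (ξ, l))) := by
  have key : ∀ (f : Eu n → EReal) (p : ℕ → Prop), (setOf p).Infinite →
      (∀ k, p k → f (x k) ≤ ((r k : ℝ) : EReal)) →
      epigraph f ⊆ epigraph (fun y => min (f₁ y) (f₂ y)) →
      ∃ (x' : ℕ → Eu n) (r' : ℕ → ℝ) (w' : ℕ → Eu n × ℝ),
        TendstoDirInfty x' u ∧ (∀ k, f (x' k) ≤ ((r' k : ℝ) : EReal)) ∧
        (∀ k, w' k ∈ frechetNCP (epigraph f) (x' k, r' k)) ∧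
        Tendsto w' atTop (𝓝 (ξ, l)) := by
    intro f p hp hpf hsub
    refine ⟨x ∘ Nat.nth p, r ∘ Nat.nth p, w ∘ Nat.nth p,
      hx.comp_strictMono (Nat.nth_strictMono hp), ?_, ?_,
      hlim.comp (Nat.nth_strictMono hp).tendsto_atTop⟩
    · intro k; exact hpf _ (Nat.nth_mem_of_infinite hp k)
    · intro k
      exact frechetNCP_mono hsub (hpf _ (Nat.nth_mem_of_infinite hp k)) (hw _)
  by_cases hS : {k | f₁ (x k) ≤ ((r k : ℝ) : EReal)}.Infinite
  · left
    exact key f₁ _ hS (fun k hk => hk) (by rw [epigraph_min]; exact Set.subset_union_left)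
  · right
    have hSc : {k | ¬ f₁ (x k) ≤ ((r k : ℝ) : EReal)}.Infinite := by
      have := (Set.not_infinite.mp hS).infinite_compl
      simpa [Set.compl_setOf] using this
    refine key f₂ _ hSc (fun k hk => ?_)
      (by rw [epigraph_min]; exact Set.subset_union_right)
    rcases min_le_iff.mp (hr k) with h | h
    · exact absurd h hk
    · exact h

/-- Minimum rule for directional subdifferentials at infinity. -/
theorem dirSubdiffInfty_min_rule {n : ℕ} (f₁ f₂ : Eu n → EReal)
    (hf₁ : LowerSemicontinuous f₁) (hf₂ : LowerSemicontinuous f₂)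
    (hb₁ : ∀ x, f₁ x ≠ ⊥) (hb₂ : ∀ x, f₂ x ≠ ⊥)
    (u : Eu n) (hu1 : ‖u‖ = 1) :
    dirSubdiffInfty (fun x => min (f₁ x) (f₂ x)) u ⊆
      dirSubdiffInfty f₁ u ∪ dirSubdiffInfty f₂ u ∧
    dirSingSubdiffInfty (fun x => min (f₁ x) (f₂ x)) u ⊆
      dirSingSubdiffInfty f₁ u ∪ dirSingSubdiffInfty f₂ u := by
  constructor
  · rintro ξ ⟨x, r, w, hx, hr, hw, hlim⟩
    exact min_aux x r w hx hr hw hlim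
  · rintro ξ ⟨x, r, w, hx, hr, hw, hlim⟩
    exact min_aux x r w hx hr hw hlim
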